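/- Per-step bound on the smooth part (inequality (feq)). Suppose f_k is convex and differentiable, x_{k+1} minimizes x ↦ f_k(x) + w_kᵀ(x − ν_k) + (ρ/2)‖x − ν_k‖² + (η/2)‖x − x_k‖²_{P_k⁻¹}, w_{k+1} = w_k + ρ(x_{k+1} − ν_{k+1}), and x⋆ = ν⋆. Then f_k(x_{k+1}) − f_k(x⋆) ≤ ∇f_k(x_{k+1})ᵀ(x_{k+1} − x⋆) = −w_{k+1}ᵀ(x_{k+1} − ν⋆) + (ρ/2)(‖ν⋆ − ν_k‖² − ‖ν⋆ − ν_{k+1}‖² + ‖x_{k+1} − ν_{k+1}‖² − ‖x_{k+1} − ν_k‖²) + (η/2)(‖x⋆ − x_k‖²_{P_k⁻¹} − ‖x⋆ − x_{k+1}‖²_{P_k⁻¹} − ‖x_{k+1} − x_k‖²_{P_k⁻¹}). -/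

import Mathlib

/-! The inequality is the first-order characterisation of convexity, obtained by restricting `f`
to the segment from `x_{k+1}` to `x⋆`. For the identity, minimality of `x_{k+1}` gives the
optimality condition `∇f(x_{k+1}) = -(w_k + ρ (x_{k+1} - ν_k) + η P⁻¹ (x_{k+1} - x_k))`; pairing it
with `x_{k+1} - x⋆` and expanding `‖x⋆ - a‖² = ‖(x_{k+1} - a) - (x_{k+1} - x⋆)‖²`, and its
`P⁻¹`-weighted analogue, turns each inner product into the differences of squares on the right. -/

open Finset Matrix
open scoped RealInnerProductSpace

/-- Action of a matrix on a Euclidean vector. -/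
noncomputable def act {ι κ : Type*} [Fintype ι] [Fintype κ] (A : Matrix ι κ ℝ)
    (v : EuclideanSpace ℝ κ) : EuclideanSpace ℝ ι :=
  WithLp.toLp 2 (A.mulVec v)

/-- Weighted squared norm `‖v‖²_M = vᵀ M v`. -/
noncomputable def qnorm {ι : Type*} [Fintype ι] (M : Matrix ι ι ℝ)
    (v : EuclideanSpace ℝ ι) : ℝ :=
  ⟪v, act M v⟫

theorem ConvexOn.apply_sub_le_of_hasFDerivAt {E : Type*} [NormedAddCommGroup E]
    [NormedSpace ℝ E] {s : Set E} {f : E → ℝ} {f' : StrongDual ℝ E} {x y : E}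
    (hf : ConvexOn ℝ s f) (hx : x ∈ s) (hy : y ∈ s) (hf' : HasFDerivAt f f' x) :
    f' (y - x) ≤ f y - f x := by
  have hline : ConvexOn ℝ (AffineMap.lineMap (k := ℝ) x y ⁻¹' s) (f ∘ AffineMap.lineMap x y) :=
    hf.comp_affineMap _
  have hderiv : HasDerivAt (f ∘ (AffineMap.lineMap x y : ℝ →ᵃ[ℝ] E)) (f' (y - x)) 0 := by
    rw [← AffineMap.lineMap_apply_zero (k := ℝ) x y] at hf'
    exact hf'.comp_hasDerivAt 0 AffineMap.hasDerivAt_lineMap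
  simpa [slope] using hline.le_slope_of_hasDerivAt (by simpa using hx) (by simpa using hy)
    zero_lt_one hderiv

theorem ConvexOn.sub_le_inner_of_hasGradientAt {F : Type*} [NormedAddCommGroup F]
    [InnerProductSpace ℝ F] [CompleteSpace F] {s : Set F} {f : F → ℝ} {g x y : F}
    (hf : ConvexOn ℝ s f) (hx : x ∈ s) (hy : y ∈ s) (hg : HasGradientAt f g x) :
    f x - f y ≤ ⟪g, x - y⟫ := by
  have := hf.apply_sub_le_of_hasFDerivAt hx hy hg.hasFDerivAt
  rw [InnerProductSpace.toDual_apply_apply, ← neg_sub x y, inner_neg_right] at this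
  linarith

section WeightedNorm

variable {ι : Type*} [Fintype ι] {M : Matrix ι ι ℝ}

theorem act_eq_toEuclideanLin [DecidableEq ι] (M : Matrix ι ι ℝ) :
    act M = toEuclideanLin M :=
  rfl

theorem qnorm_sub_comm (M : Matrix ι ι ℝ) (u v : EuclideanSpace ℝ ι) :
    qnorm M (u - v) = qnorm M (v - u) := by
  classical
  rw [qnorm, qnorm, act_eq_toEuclideanLin, ← neg_sub v u, map_neg, inner_neg_neg]

theorem Matrix.IsHermitian.qnorm_sub (hM : M.IsHermitian) (u v : EuclideanSpace ℝ ι) :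
    qnorm M (u - v) = qnorm M u - 2 * ⟪act M u, v⟫ + qnorm M v := by
  classical
  have hT := isSymmetric_toEuclideanLin_iff.mpr hM
  simp only [qnorm, act_eq_toEuclideanLin, map_sub, inner_sub_left, inner_sub_right]
  linarith [hT u v, real_inner_comm v (toEuclideanLin M u)]

theorem Matrix.IsHermitian.hasFDerivAt_qnorm (hM : M.IsHermitian) (x : EuclideanSpace ℝ ι) :
    HasFDerivAt (qnorm M) (2 • innerSL ℝ (act M x)) x := by
  classical
  have hq : qnorm M = (toEuclideanCLM (𝕜 := ℝ) M).reApplyInnerSelf := by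
    ext v
    rw [ContinuousLinearMap.reApplyInnerSelf_apply, RCLike.re_to_real, real_inner_comm]
    rfl
  rw [hq]
  exact (LinearMap.IsSymmetric.hasStrictFDerivAt_reApplyInnerSelf (T := toEuclideanCLM (𝕜 := ℝ) M)
    (isSymmetric_toEuclideanLin_iff.mpr hM) x).hasFDerivAt

end WeightedNorm

section ProxStep

variable {ι : Type*} [Fintype ι]

noncomputable def proxObjective (f : EuclideanSpace ℝ ι → ℝ) (w ν xk : EuclideanSpace ℝ ι)
    (ρ η : ℝ) (M : Matrix ι ι ℝ) (z : EuclideanSpace ℝ ι) : ℝ :=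
  f z + ⟪w, z - ν⟫ + ρ / 2 * ‖z - ν‖ ^ 2 + η / 2 * qnorm M (z - xk)

theorem hasFDerivAt_proxObjective {f : EuclideanSpace ℝ ι → ℝ} {g w ν xk x : EuclideanSpace ℝ ι}
    {ρ η : ℝ} {M : Matrix ι ι ℝ} (hM : M.IsHermitian) (hf : HasGradientAt f g x) :
    HasFDerivAt (proxObjective f w ν xk ρ η M)
      (InnerProductSpace.toDual ℝ _ (g + (w + ρ • (x - ν) + η • act M (x - xk)))) x := by
  have hsub (c : EuclideanSpace ℝ ι) := (hasFDerivAt_id (𝕜 := ℝ) x).sub_const c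
  have hlin := (innerSL ℝ w).hasFDerivAt.comp x (hsub ν)
  have hsq := (hsub ν).norm_sq
  have hq := (hM.hasFDerivAt_qnorm (x - xk)).comp x (hsub xk)
  refine (((hf.hasFDerivAt.add hlin).add (hsq.const_mul (ρ / 2))).add
    (hq.const_mul (η / 2))).congr_fderiv ?_
  ext v
  simp only [ContinuousLinearMap.comp_id, id_eq, map_sub, map_add, map_smul, _root_.add_apply,
    _root_.smul_apply, _root_.sub_apply, InnerProductSpace.toDual_apply_apply, coe_innerSL_apply,
    nsmul_eq_mul, Nat.cast_ofNat, smul_eq_mul]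
  ring

theorem gradient_eq_of_forall_proxObjective_le {f : EuclideanSpace ℝ ι → ℝ}
    {g w ν xk x : EuclideanSpace ℝ ι} {ρ η : ℝ} {M : Matrix ι ι ℝ} (hM : M.IsHermitian)
    (hf : HasGradientAt f g x)
    (hmin : ∀ z, proxObjective f w ν xk ρ η M x ≤ proxObjective f w ν xk ρ η M z) :
    g = -(w + ρ • (x - ν) + η • act M (x - xk)) := by
  have hzero := IsLocalMin.hasFDerivAt_eq_zero (Filter.Eventually.of_forall hmin)
    (hasFDerivAt_proxObjective hM hf)
  exact eq_neg_of_add_eq_zero_left ((InnerProductSpace.toDual ℝ _).map_eq_zero_iff.mp hzero)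

end ProxStep

theorem per_step_smooth_bound_general {n : ℕ}
    (f : EuclideanSpace ℝ (Fin n) → ℝ) (gradf : EuclideanSpace ℝ (Fin n))
    (hconv : ConvexOn ℝ Set.univ f)
    (Pinv : Matrix (Fin n) (Fin n) ℝ) (hP : Pinv.PosDef)
    (ρ η : ℝ)
    (xk xk1 νk νk1 wk wk1 xs νs : EuclideanSpace ℝ (Fin n))
    (hgrad : HasGradientAt f gradf xk1)
    (hmin : ∀ z : EuclideanSpace ℝ (Fin n),
      f xk1 + ⟪wk, xk1 - νk⟫ + ρ / 2 * ‖xk1 - νk‖ ^ 2 + η / 2 * qnorm Pinv (xk1 - xk)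
        ≤ f z + ⟪wk, z - νk⟫ + ρ / 2 * ‖z - νk‖ ^ 2 + η / 2 * qnorm Pinv (z - xk))
    (hw : wk1 = wk + ρ • (xk1 - νk1))
    (hfeas : xs = νs) :
    f xk1 - f xs ≤ ⟪gradf, xk1 - xs⟫ ∧
    ⟪gradf, xk1 - xs⟫
      = -⟪wk1, xk1 - νs⟫
        + ρ / 2 * (‖νs - νk‖ ^ 2 - ‖νs - νk1‖ ^ 2 + ‖xk1 - νk1‖ ^ 2 - ‖xk1 - νk‖ ^ 2)
        + η / 2 * (qnorm Pinv (xs - xk) - qnorm Pinv (xs - xk1) - qnorm Pinv (xk1 - xk)) := by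
  subst hfeas
  have hM := hP.isHermitian
  refine ⟨hconv.sub_le_inner_of_hasGradientAt (Set.mem_univ _) (Set.mem_univ _) hgrad, ?_⟩
  have hopt := gradient_eq_of_forall_proxObjective_le hM hgrad hmin
  have hνk := norm_sub_sq_real (xk1 - νk) (xk1 - xs)
  have hνk1 := norm_sub_sq_real (xk1 - νk1) (xk1 - xs)
  have hxk := hM.qnorm_sub (xk1 - xk) (xk1 - xs)
  rw [sub_sub_sub_cancel_left] at hνk hνk1 hxk
  rw [qnorm_sub_comm Pinv xs xk1, hopt, hw]
  simp only [inner_neg_left, inner_add_left, real_inner_smul_left]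
  linear_combination (ρ / 2) * (hνk1 - hνk) - (η / 2) * hxk

/-- Per-step bound on the smooth part (inequality (feq) in the proof of Theorem 1). -/
theorem per_step_smooth_bound {n : ℕ}
    (f : EuclideanSpace ℝ (Fin n) → ℝ) (gradf : EuclideanSpace ℝ (Fin n))
    (hconv : ConvexOn ℝ Set.univ f)
    (Pinv : Matrix (Fin n) (Fin n) ℝ) (hP : Pinv.PosDef)
    (ρ η : ℝ) (hρ : 0 < ρ) (hη : 0 < η)
    (xk xk1 νk νk1 wk wk1 xs νs : EuclideanSpace ℝ (Fin n))
    (hgrad : HasGradientAt f gradf xk1)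
    (hmin : ∀ z : EuclideanSpace ℝ (Fin n),
      f xk1 + ⟪wk, xk1 - νk⟫ + ρ / 2 * ‖xk1 - νk‖ ^ 2 + η / 2 * qnorm Pinv (xk1 - xk)
        ≤ f z + ⟪wk, z - νk⟫ + ρ / 2 * ‖z - νk‖ ^ 2 + η / 2 * qnorm Pinv (z - xk))
    (hw : wk1 = wk + ρ • (xk1 - νk1))
    (hfeas : xs = νs) :
    f xk1 - f xs ≤ ⟪gradf, xk1 - xs⟫ ∧
    ⟪gradf, xk1 - xs⟫
      = -⟪wk1, xk1 - νs⟫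
        + ρ / 2 * (‖νs - νk‖ ^ 2 - ‖νs - νk1‖ ^ 2 + ‖xk1 - νk1‖ ^ 2 - ‖xk1 - νk‖ ^ 2)
        + η / 2 * (qnorm Pinv (xs - xk) - qnorm Pinv (xs - xk1) - qnorm Pinv (xk1 - xk)) :=
  per_step_smooth_bound_general f gradf hconv Pinv hP ρ η xk xk1 νk νk1 wk wk1 xs νs hgrad hmin hw
    hfeas
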